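/- Let M : ℝ → ℝ be a 2π-periodic function, integrable on [−π, π], with ∫_{−π}^{π} |M(x)| dx ≤ A for some A > 0, and define F(x) = ∫_{−π}^{π} M(x') H(x − x') dx'. Then for every nonzero integer k, the Fourier coefficient F̂_k = (1/√(2π)) ∫_{−π}^{π} F(x) e^{−ikx} dx satisfies |F̂_k| ≤ 2A/(√(2π) |k|); moreover F̂_k = 0 whenever k is even and nonzero. -/

import Mathlib

/-!
`F` is the convolution of `M` with `H` over one period. By Fubini and the translation invariance
of integrals of `2π`-periodic functions over a period, its `k`-th Fourier coefficient is the
product of those of `M` and `H`. The first is bounded by `∫ |M| ≤ A`; the second is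
`∫₀^π e^{-iku} du = ((-1)^k - 1) / (-ik)`, of modulus at most `2 / |k|` and zero for even `k`.
-/

open Real Classical

/-- The 2π-periodic Heaviside function: `H(x) = 1` for `x ∈ [2kπ, (2k+1)π)` and
`H(x) = 0` for `x ∈ [(2k−1)π, 2kπ)`, `k ∈ ℤ`. -/
noncomputable def Hper (x : ℝ) : ℝ :=
  if ∃ k : ℤ, 2 * k * π ≤ x ∧ x < (2 * k + 1) * π then 1 else 0

open MeasureTheory

lemma measurable_Hper : Measurable Hper := by
  have : Hper = Set.indicator (⋃ k : ℤ, Set.Ico (2 * (k : ℝ) * π) ((2 * k + 1) * π)) 1 := by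
    funext x
    simp [Hper, Set.indicator_apply]
  rw [this]
  exact measurable_one.indicator (.iUnion fun _ => measurableSet_Ico)

lemma abs_Hper_le_one (x : ℝ) : |Hper x| ≤ 1 := by
  unfold Hper; split <;> norm_num

lemma Hper_periodic : Function.Periodic Hper (2 * π) := by
  intro x
  unfold Hper
  congr 1
  refine propext ⟨fun ⟨k, h⟩ => ⟨k - 1, ?_⟩, fun ⟨k, h⟩ => ⟨k + 1, ?_⟩⟩ <;>
    push_cast <;> constructor <;> linarith [h.1, h.2]

lemma Hper_eq_one_of_mem_Ico {x : ℝ} (hx : x ∈ Set.Ico 0 π) : Hper x = 1 :=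
  if_pos ⟨0, by simpa using hx⟩

lemma Hper_eq_zero_of_mem_Ico {x : ℝ} (hx : x ∈ Set.Ico (-π) 0) : Hper x = 0 := by
  refine if_neg fun ⟨k, hk₁, hk₂⟩ => ?_
  have hk : k < 0 := by exact_mod_cast (show (k : ℝ) < 0 by nlinarith [hx.2, pi_pos])
  nlinarith [hx.1, pi_pos, Int.cast_le_neg_one_of_neg (R := ℝ) hk]

lemma norm_exp_neg_I_mul_int_mul (k : ℤ) (x : ℝ) :
    ‖Complex.exp (-Complex.I * k * x)‖ = 1 := by
  rw [show -Complex.I * k * x = ((-(k * x) : ℝ) : ℂ) * Complex.I by push_cast; ring]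
  exact Complex.norm_exp_ofReal_mul_I _

lemma exp_neg_I_mul_int_mul_periodic (k : ℤ) :
    Function.Periodic (fun x : ℝ => Complex.exp (-Complex.I * k * x)) (2 * π) := by
  intro x
  dsimp only
  rw [show -Complex.I * k * ((x + 2 * π : ℝ) : ℂ) =
      -Complex.I * k * x + (-k : ℤ) * (2 * π * Complex.I) by push_cast; ring,
    Complex.exp_add, Complex.exp_int_mul_two_pi_mul_I, mul_one]

lemma exp_neg_I_mul_int_mul_pi (k : ℤ) : Complex.exp (-Complex.I * k * π) = (-1) ^ k := by
  rw [show -Complex.I * k * π = (-k : ℤ) * (π * Complex.I) by push_cast; ring,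
    Complex.exp_int_mul, Complex.exp_pi_mul_I, zpow_neg, ← inv_zpow, inv_neg, inv_one]

/-- The coefficient `F̂_k` of the statement without its normalising factor `1 / √(2π)`. -/
noncomputable def rawFourierCoeff (f : ℝ → ℝ) (k : ℤ) : ℂ :=
  ∫ x in (-π)..π, (f x : ℂ) * Complex.exp (-Complex.I * k * x)

lemma norm_rawFourierCoeff_le (f : ℝ → ℝ) (k : ℤ) :
    ‖rawFourierCoeff f k‖ ≤ ∫ x in (-π)..π, |f x| := by
  refine (intervalIntegral.norm_integral_le_integral_norm (by linarith [pi_pos])).trans_eq ?_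
  congr with x
  rw [norm_mul, norm_exp_neg_I_mul_int_mul, mul_one, Complex.norm_real, Real.norm_eq_abs]

lemma rawFourierCoeff_comp_sub {g : ℝ → ℝ} (hg : Function.Periodic g (2 * π))
    (k : ℤ) (y : ℝ) :
    rawFourierCoeff (fun x => g (x - y)) k =
      Complex.exp (-Complex.I * k * y) * rawFourierCoeff g k := by
  have hshift : ∀ x : ℝ, (g (x - y) : ℂ) * Complex.exp (-Complex.I * k * x) =
      Complex.exp (-Complex.I * k * y) *
        ((g (x - y) : ℂ) * Complex.exp (-Complex.I * k * (x - y : ℝ))) := by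
    intro x
    rw [mul_left_comm, ← Complex.exp_add]
    push_cast
    ring_nf
  have hper : Function.Periodic
      (fun u : ℝ => (g u : ℂ) * Complex.exp (-Complex.I * k * u)) (2 * π) := fun u => by
    simp only [hg u, exp_neg_I_mul_int_mul_periodic k u]
  replace hper := hper.intervalIntegral_add_eq (-π - y) (-π)
  rw [show -π - y + 2 * π = π - y by ring, show -π + 2 * π = π by ring] at hper
  simp only [rawFourierCoeff, hshift, intervalIntegral.integral_const_mul]
  rw [intervalIntegral.integral_comp_sub_right
    (fun u => (g u : ℂ) * Complex.exp (-Complex.I * k * u)) y]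
  exact congrArg _ hper

lemma rawFourierCoeff_Hper {k : ℤ} (hk : k ≠ 0) :
    rawFourierCoeff Hper k = ((-1) ^ k - 1) / (-Complex.I * k) := by
  have hπ := pi_pos
  have hc : -Complex.I * k ≠ 0 := by simpa using hk
  have hexp : Continuous fun u : ℝ => Complex.exp (-Complex.I * k * u) := by fun_prop
  have hint : ∀ a b : ℝ, IntervalIntegrable
      (fun u => (Hper u : ℂ) * Complex.exp (-Complex.I * k * u)) volume a b := fun a b =>
    (intervalIntegrable_const (c := (1 : ℝ))).mono_fun'
      ((Complex.measurable_ofReal.comp measurable_Hper).aestronglyMeasurable.mul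
        hexp.aestronglyMeasurable)
      (.of_forall fun u => by
        dsimp only
        rw [norm_mul, norm_exp_neg_I_mul_int_mul, mul_one, Complex.norm_real, Real.norm_eq_abs]
        exact abs_Hper_le_one u)
  have hneg : ∫ u in (-π)..0, (Hper u : ℂ) * Complex.exp (-Complex.I * k * u) = 0 := by
    rw [intervalIntegral.integral_congr_Ioo_of_le (g := 0) (by linarith)
      fun u hu => by simp [Hper_eq_zero_of_mem_Ico (Set.Ioo_subset_Ico_self hu)]]
    exact intervalIntegral.integral_zero
  have hpos : ∫ u in (0 : ℝ)..π, (Hper u : ℂ) * Complex.exp (-Complex.I * k * u) =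
      ∫ u in (0 : ℝ)..π, Complex.exp (-Complex.I * k * u) :=
    intervalIntegral.integral_congr_Ioo_of_le hπ.le
      fun u hu => by simp [Hper_eq_one_of_mem_Ico (Set.Ioo_subset_Ico_self hu)]
  rw [rawFourierCoeff, ← intervalIntegral.integral_add_adjacent_intervals (hint _ 0) (hint 0 _),
    hneg, hpos, zero_add, integral_exp_mul_complex hc, exp_neg_I_mul_int_mul_pi]
  simp

lemma integrableOn_conv_integrand {M g : ℝ → ℝ} {C : ℝ}
    (hM : IntervalIntegrable M volume (-π) π) (hgm : Measurable g) (hgC : ∀ x, |g x| ≤ C)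
    (k : ℤ) :
    IntegrableOn (Function.uncurry fun x x' : ℝ =>
        (M x' : ℂ) * ((g (x - x') : ℂ) * Complex.exp (-Complex.I * k * x)))
      (Set.uIoc (-π) π ×ˢ Set.uIoc (-π) π) := by
  rw [intervalIntegrable_iff, Set.uIoc_of_le (by linarith [pi_pos])] at hM
  rw [Set.uIoc_of_le (by linarith [pi_pos]), IntegrableOn, Measure.volume_eq_prod,
    ← Measure.prod_restrict]
  refine ((integrable_const C).mul_prod hM.abs).mono' ?_ (.of_forall fun ⟨x, x'⟩ => ?_)
  · have hMm := Complex.continuous_ofReal.comp_aestronglyMeasurable hM.aestronglyMeasurable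
    have hgm' := Complex.measurable_ofReal.comp (hgm.comp (measurable_fst.sub measurable_snd))
    have hexp : Continuous fun p : ℝ × ℝ => Complex.exp (-Complex.I * k * p.1) := by fun_prop
    exact hMm.comp_snd.mul (hgm'.aestronglyMeasurable.mul hexp.aestronglyMeasurable)
  · simp only [Function.uncurry, norm_mul, norm_exp_neg_I_mul_int_mul, Complex.norm_real,
      Real.norm_eq_abs, mul_one]
    rw [mul_comm]
    exact mul_le_mul_of_nonneg_right (hgC _) (abs_nonneg _)

theorem rawFourierCoeff_conv {M g : ℝ → ℝ} {C : ℝ}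
    (hM : IntervalIntegrable M volume (-π) π)
    (hg : Function.Periodic g (2 * π)) (hgm : Measurable g) (hgC : ∀ x, |g x| ≤ C) (k : ℤ) :
    rawFourierCoeff (fun x => ∫ x' in (-π)..π, M x' * g (x - x')) k =
      rawFourierCoeff M k * rawFourierCoeff g k := calc
  _ = ∫ x in (-π)..π, ∫ x' in (-π)..π,
        (M x' : ℂ) * ((g (x - x') : ℂ) * Complex.exp (-Complex.I * k * x)) := by
    unfold rawFourierCoeff
    congr with x
    dsimp only
    rw [← intervalIntegral.integral_ofReal, ← intervalIntegral.integral_mul_const]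
    push_cast
    simp only [mul_assoc]
  _ = ∫ x' in (-π)..π, ∫ x in (-π)..π,
        (M x' : ℂ) * ((g (x - x') : ℂ) * Complex.exp (-Complex.I * k * x)) :=
    intervalIntegral_intervalIntegral_swap (integrableOn_conv_integrand hM hgm hgC k)
  _ = ∫ x' in (-π)..π,
        (M x' : ℂ) * Complex.exp (-Complex.I * k * x') * rawFourierCoeff g k := by
    congr with x'
    rw [intervalIntegral.integral_const_mul, mul_assoc, ← rawFourierCoeff_comp_sub hg]
    rfl
  _ = rawFourierCoeff M k * rawFourierCoeff g k := intervalIntegral.integral_mul_const _ _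

lemma norm_neg_one_zpow_sub_one_div_le (k : ℤ) :
    ‖((-1 : ℂ) ^ k - 1) / (-Complex.I * k)‖ ≤ 2 / |(k : ℝ)| := by
  rw [norm_div, norm_mul, norm_neg, Complex.norm_I, one_mul, Complex.norm_intCast]
  gcongr
  calc ‖(-1 : ℂ) ^ k - 1‖ ≤ ‖(-1 : ℂ) ^ k‖ + ‖(1 : ℂ)‖ := norm_sub_le _ _
    _ = 2 := by rw [norm_zpow, norm_neg, norm_one, one_zpow]; norm_num

theorem stmt_9_general (M : ℝ → ℝ) (A : ℝ)
    (hint : IntervalIntegrable M MeasureTheory.volume (-π) π)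
    (habs : (∫ x in (-π)..π, |M x|) ≤ A)
    (F : ℝ → ℝ) (hF : ∀ x : ℝ, F x = ∫ x' in (-π)..π, M x' * Hper (x - x'))
    (k : ℤ) (hk : k ≠ 0) :
    ‖((1 / Real.sqrt (2 * π) : ℂ) *
        ∫ x in (-π)..π, (F x : ℂ) * Complex.exp (-Complex.I * k * x))‖ ≤
      2 * A / (Real.sqrt (2 * π) * |(k : ℝ)|) ∧
    (Even k →
      (1 / Real.sqrt (2 * π) : ℂ) *
        (∫ x in (-π)..π, (F x : ℂ) * Complex.exp (-Complex.I * k * x)) = 0) := by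
  obtain rfl : F = _ := funext hF
  change ‖(1 / √(2 * π) : ℂ) * rawFourierCoeff _ k‖ ≤ _ ∧
    (Even k → (1 / √(2 * π) : ℂ) * rawFourierCoeff _ k = 0)
  rw [rawFourierCoeff_conv hint Hper_periodic measurable_Hper abs_Hper_le_one,
    rawFourierCoeff_Hper hk]
  refine ⟨?_, fun hk_even => by simp [hk_even.neg_one_zpow]⟩
  have hMA : ‖rawFourierCoeff M k‖ ≤ A := (norm_rawFourierCoeff_le M k).trans habs
  have hA : 0 ≤ A := (norm_nonneg _).trans hMA
  calc _ = 1 / √(2 * π) *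
        (‖rawFourierCoeff M k‖ * ‖((-1 : ℂ) ^ k - 1) / (-Complex.I * k)‖) := by
        rw [norm_mul, norm_mul, norm_div, norm_one, Complex.norm_real,
          Real.norm_of_nonneg (sqrt_nonneg _)]
    _ ≤ 1 / √(2 * π) * (A * (2 / |(k : ℝ)|)) := by
        gcongr
        exact norm_neg_one_zpow_sub_one_div_le k
    _ = 2 * A / (√(2 * π) * |(k : ℝ)|) := by ring

theorem stmt_9 (M : ℝ → ℝ) (A : ℝ) (hA : 0 < A)
    (hper : ∀ x : ℝ, M (x + 2 * π) = M x)
    (hint : IntervalIntegrable M MeasureTheory.volume (-π) π)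
    (habs : (∫ x in (-π)..π, |M x|) ≤ A)
    (F : ℝ → ℝ) (hF : ∀ x : ℝ, F x = ∫ x' in (-π)..π, M x' * Hper (x - x'))
    (k : ℤ) (hk : k ≠ 0) :
    ‖((1 / Real.sqrt (2 * π) : ℂ) *
        ∫ x in (-π)..π, (F x : ℂ) * Complex.exp (-Complex.I * k * x))‖ ≤
      2 * A / (Real.sqrt (2 * π) * |(k : ℝ)|) ∧
    (Even k →
      (1 / Real.sqrt (2 * π) : ℂ) *
        (∫ x in (-π)..π, (F x : ℂ) * Complex.exp (-Complex.I * k * x)) = 0) :=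
  stmt_9_general M A hint habs F hF k hk
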